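/- arXiv:0711.3759 — 2 statements merged into one kernel-verified Lean document; each statement's English description precedes it below -/
import Mathlib

section
/- (Theorem 1.2(3).) Fix t_0 ∈ ℂ and s ∈ {1,…,n}, and let u_i ∈ ℂ (i ≠ s) be arbitrary scalars. If rank M^{X,s}_2(t_0, u) ≤ 2n (i.e. the fibre point x with coordinates λ_s = 1, λ_i = u_i lies in Φ_2(X)), then rank M^s_2(t_0) = 2 (i.e. p_s is a flex of C_s). -/
/-!
Projecting `V` onto the `s`-th block kills the `2(n-1)` rows `ι_i(row m of M^i_1(t₀))`, `i ≠ s`,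
which are linearly independent because each `C_i` is immersed, and maps the row space of
`M^{X,s}_2(t₀,u)` onto that of `M^s_2(t₀)`. Rank–nullity for the projection restricted to the
row space gives `rank M^s_2 + 2(n-1) ≤ rank M^{X,s}_2 ≤ 2n`, so `rank M^s_2 ≤ 2`, while
`rank M^s_2 ≥ rank M^s_1 = 2`.
-/

open Matrix

/-- The `k`-th jet matrix `M^i_k(t)` of a parametrized curve. -/
noncomputable def curveJet (r : ℕ) (a : ℂ → Fin (r + 1) → ℂ) (k : ℕ) (t : ℂ) :
    Matrix (Fin (k + 1)) (Fin (r + 1)) ℂ :=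
  Matrix.of fun l j => iteratedDeriv (l : ℕ) (fun s => a s j) t

/-- The `i`-th block inclusion `ι_i : ℂ^{r_i+1} → V`. -/
noncomputable def blockIncl {n : ℕ} (r : Fin n → ℕ) (i : Fin n)
    (v : Fin (r i + 1) → ℂ) : (Σ j : Fin n, Fin (r j + 1)) → ℂ :=
  fun p => if h : p.1 = i then v (Fin.cast (by rw [h]) p.2) else 0

/-- The `k`-th jet matrix `M^{X,s}_k(t,u)` of the decomposable scroll. -/
noncomputable def scrollJet {n : ℕ} (r : Fin n → ℕ)
    (a : ∀ i : Fin n, ℂ → Fin (r i + 1) → ℂ) (k : ℕ) (s : Fin n) (t : ℂ)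
    (u : Fin n → ℂ) :
    Matrix (Fin (k + 1) ⊕ ({i : Fin n // i ≠ s} × Fin k))
      (Σ j : Fin n, Fin (r j + 1)) ℂ :=
  Matrix.of fun row =>
    match row with
    | Sum.inl l =>
        blockIncl r s (curveJet (r s) (a s) k t l) +
          ∑ i ∈ Finset.univ.filter (fun i => i ≠ s),
            u i • blockIncl r i (curveJet (r i) (a i) k t l)
    | Sum.inr q =>
        blockIncl r q.1.1 (curveJet (r q.1.1) (a q.1.1) k t q.2.castSucc)

/-- The row space of a matrix, i.e. the span of its rows. -/
noncomputable def rowSpace {m α : Type*} [Fintype m] (M : Matrix m α ℂ) : Submodule ℂ (α → ℂ) :=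
  Submodule.span ℂ (Set.range fun i => M i)

section Rank

variable {K V W : Type*} [Field K] [AddCommGroup V] [Module K V] [AddCommGroup W] [Module K W]

theorem Submodule.finrank_map_add_finrank_inf_ker (L : V →ₗ[K] W) (S : Submodule K V)
    [FiniteDimensional K S] :
    Module.finrank K (S.map L) + Module.finrank K ↥(S ⊓ LinearMap.ker L) = Module.finrank K S := by
  have h := LinearMap.finrank_range_add_finrank_ker (L.domRestrict S)
  rw [LinearMap.range_domRestrict, LinearMap.ker_domRestrict] at h
  rwa [← Submodule.map_comap_subtype, Submodule.finrank_map_subtype_eq]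

theorem Submodule.finrank_map_add_card_le {ι : Type*} [Fintype ι] (L : V →ₗ[K] W)
    (S : Submodule K V) [FiniteDimensional K S] {v : ι → V} (hv : LinearIndependent K v)
    (hvS : ∀ q, v q ∈ S) (hvL : ∀ q, L (v q) = 0) :
    Module.finrank K (S.map L) + Fintype.card ι ≤ Module.finrank K S := by
  have hle : Submodule.span K (Set.range v) ≤ S ⊓ LinearMap.ker L :=
    Submodule.span_le.mpr <| Set.range_subset_iff.mpr fun q => ⟨hvS q, hvL q⟩
  rw [← S.finrank_map_add_finrank_inf_ker L, ← finrank_span_eq_card hv]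
  exact Nat.add_le_add_left (Submodule.finrank_mono hle) _

end Rank

theorem Matrix.linearIndependent_row_of_rank_eq {R m α : Type*} [Field R] [Fintype m] [Fintype α]
    {M : Matrix m α R} (h : M.rank = Fintype.card m) : LinearIndependent R M.row := by
  rw [linearIndependent_iff_card_eq_finrank_span, Set.finrank, ← Matrix.rank_eq_finrank_span_row,
    h]

theorem rank_eq_finrank_rowSpace {m α : Type*} [Fintype m] [Fintype α] (M : Matrix m α ℂ) :
    M.rank = Module.finrank ℂ (rowSpace M) :=
  M.rank_eq_finrank_span_row

section Curve

variable {r : ℕ} (a : ℂ → Fin (r + 1) → ℂ) (k : ℕ) (t : ℂ)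

theorem curveJet_succ_castSucc (l : Fin (k + 1)) :
    curveJet r a (k + 1) t l.castSucc = curveJet r a k t l := by
  funext j
  simp [curveJet]

theorem rank_curveJet_le_succ : (curveJet r a k t).rank ≤ (curveJet r a (k + 1) t).rank := by
  have h : curveJet r a k t = (curveJet r a (k + 1) t).submatrix Fin.castSucc id := by
    ext l j
    exact congrFun (curveJet_succ_castSucc a k t l).symm j
  rw [h]
  exact rank_submatrix_le _ _ _

end Curve

section Blocks

variable {n : ℕ} (r : Fin n → ℕ)

noncomputable def blockProj (s : Fin n) :
    ((Σ j : Fin n, Fin (r j + 1)) → ℂ) →ₗ[ℂ] (Fin (r s + 1) → ℂ) :=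
  LinearMap.funLeft ℂ ℂ fun j => ⟨s, j⟩

theorem blockProj_blockIncl_self (s : Fin n) (v : Fin (r s + 1) → ℂ) :
    blockProj r s (blockIncl r s v) = v := by
  funext j
  simp [blockProj, blockIncl]

theorem blockProj_blockIncl_of_ne {s i : Fin n} (hi : i ≠ s) (v : Fin (r i + 1) → ℂ) :
    blockProj r s (blockIncl r i v) = 0 := by
  funext j
  simp [blockProj, blockIncl, hi.symm]

theorem linearIndependent_blockIncl {P : Fin n → Prop} {κ : Type*} [Fintype κ]
    (w : ∀ i, κ → Fin (r i + 1) → ℂ) (hw : ∀ i, P i → LinearIndependent ℂ (w i)) :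
    LinearIndependent ℂ fun q : {i // P i} × κ => blockIncl r q.1.1 (w q.1.1 q.2) := by
  classical
  rw [Fintype.linearIndependent_iff]
  intro g hg ⟨i, m⟩
  have hproj := congrArg (blockProj r i.1) hg
  simp only [map_sum, _root_.map_smul, map_zero, Fintype.sum_prod_type] at hproj
  rw [Finset.sum_eq_single i (fun j _ hji => Finset.sum_eq_zero fun m _ => by
      rw [blockProj_blockIncl_of_ne r (fun h => hji (Subtype.ext h)), smul_zero])
    (by simp)] at hproj
  simp only [blockProj_blockIncl_self] at hproj
  exact Fintype.linearIndependent_iff.mp (hw i.1 i.2) _ hproj m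

end Blocks

section Scroll

variable {n : ℕ} (r : Fin n → ℕ) (a : ∀ i : Fin n, ℂ → Fin (r i + 1) → ℂ) (k : ℕ) (s : Fin n)
  (t : ℂ) (u : Fin n → ℂ)

theorem blockProj_scrollJet_inl (l : Fin (k + 1)) :
    blockProj r s (scrollJet r a k s t u (Sum.inl l)) = curveJet (r s) (a s) k t l := by
  change blockProj r s (blockIncl r s _ + ∑ i ∈ Finset.univ.filter (· ≠ s), u i • _) = _
  rw [map_add, map_sum, blockProj_blockIncl_self, Finset.sum_eq_zero, add_zero]
  intro i hi
  rw [_root_.map_smul, blockProj_blockIncl_of_ne r (Finset.mem_filter.mp hi).2, smul_zero]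

theorem blockProj_scrollJet_inr (q : {i // i ≠ s} × Fin k) :
    blockProj r s (scrollJet r a k s t u (Sum.inr q)) = 0 :=
  blockProj_blockIncl_of_ne r q.1.2 _

theorem map_blockProj_rowSpace_scrollJet :
    (rowSpace (scrollJet r a k s t u)).map (blockProj r s) =
      rowSpace (curveJet (r s) (a s) k t) := by
  rw [rowSpace, Submodule.map_span]
  apply le_antisymm
  · rw [Submodule.span_le]
    rintro _ ⟨_, ⟨row, rfl⟩, rfl⟩
    cases row with
    | inl l => exact Submodule.subset_span ⟨l, (blockProj_scrollJet_inl r a k s t u l).symm⟩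
    | inr q =>
      rw [blockProj_scrollJet_inr]
      exact zero_mem _
  · rw [rowSpace, Submodule.span_le]
    rintro _ ⟨l, rfl⟩
    exact Submodule.subset_span ⟨_, ⟨Sum.inl l, rfl⟩, blockProj_scrollJet_inl r a k s t u l⟩

theorem linearIndependent_scrollJet_inr
    (hk : ∀ i, i ≠ s → (curveJet (r i) (a i) k t).rank = k + 1) :
    LinearIndependent ℂ fun q => scrollJet r a (k + 1) s t u (Sum.inr q) := by
  have hrows : (fun q => scrollJet r a (k + 1) s t u (Sum.inr q)) =
      fun q : {i // i ≠ s} × Fin (k + 1) =>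
        blockIncl r q.1.1 (curveJet (r q.1.1) (a q.1.1) k t q.2) := by
    funext q
    exact congrArg (blockIncl r q.1.1) (curveJet_succ_castSucc _ k t q.2)
  rw [hrows]
  exact linearIndependent_blockIncl r (fun i => curveJet (r i) (a i) k t) fun i hi =>
    Matrix.linearIndependent_row_of_rank_eq (M := curveJet (r i) (a i) k t)
      (by rw [hk i hi, Fintype.card_fin])

theorem rank_curveJet_add_le_rank_scrollJet
    (hk : ∀ i, i ≠ s → (curveJet (r i) (a i) k t).rank = k + 1) :
    (curveJet (r s) (a s) (k + 1) t).rank + (n - 1) * (k + 1) ≤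
      (scrollJet r a (k + 1) s t u).rank := by
  have hcard : Fintype.card ({i // i ≠ s} × Fin (k + 1)) = (n - 1) * (k + 1) := by
    simp [Fintype.card_subtype_compl]
  rw [rank_eq_finrank_rowSpace, rank_eq_finrank_rowSpace, ← hcard,
    ← map_blockProj_rowSpace_scrollJet r a (k + 1) s t u]
  exact Submodule.finrank_map_add_card_le _ _ (linearIndependent_scrollJet_inr r a k s t u hk)
    (fun q => Submodule.subset_span ⟨Sum.inr q, rfl⟩) (blockProj_scrollJet_inr r a _ s t u)

end Scroll

theorem statement3_general {n : ℕ} (r : Fin n → ℕ)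
    (a : ∀ i : Fin n, ℂ → Fin (r i + 1) → ℂ)
    (hnd : ∀ i t, (curveJet (r i) (a i) 1 t).rank = 2)
    (t0 : ℂ) (s : Fin n) (u : Fin n → ℂ)
    (h : (scrollJet r a 2 s t0 u).rank ≤ 2 * n) :
    (curveJet (r s) (a s) 2 t0).rank = 2 := by
  have hupper : (curveJet (r s) (a s) 2 t0).rank + (n - 1) * 2 ≤ (scrollJet r a 2 s t0 u).rank :=
    rank_curveJet_add_le_rank_scrollJet r a 1 s t0 u fun i _ => hnd i t0
  have hlower : (curveJet (r s) (a s) 1 t0).rank ≤ (curveJet (r s) (a s) 2 t0).rank :=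
    rank_curveJet_le_succ (a s) 1 t0
  rw [hnd s t0] at hlower
  have hn_pos := s.pos
  omega

/-- Theorem 1.2(3): if the fibre point with coordinates `λ_s = 1`,
`λ_i = u_i` lies in `Φ₂(X)`, then `p_s` is a flex of `C_s`. -/
theorem statement3 {n : ℕ} (hn : 2 ≤ n) (r : Fin n → ℕ) (hr : ∀ i, 1 ≤ r i)
    (a : ∀ i : Fin n, ℂ → Fin (r i + 1) → ℂ)
    (hent : ∀ i j, Differentiable ℂ fun t => a i t j)
    (hnd : ∀ i t, (curveJet (r i) (a i) 1 t).rank = 2)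
    (t0 : ℂ) (s : Fin n) (u : Fin n → ℂ)
    (h : (scrollJet r a 2 s t0 u).rank ≤ 2 * n) :
    (curveJet (r s) (a s) 2 t0).rank = 2 :=
  statement3_general r a hnd t0 s u h
end

section
/- (Corollary 1.3.) Assume moreover r_i ≥ 2 for every i. Then X is uninflected if and only if all the generating curves are uninflected; precisely: rank M^{X,s}_2(t, u) = 2n + 1 for every t ∈ ℂ, every s ∈ {1,…,n} and all scalars u_i ∈ ℂ (i ≠ s), if and only if rank M^i_2(t) = 3 for every i ∈ {1,…,n} and every t ∈ ℂ. -/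
/-
With `V = ⊕ᵢ ℂ^{r_i+1}`, the rows of `M^{X,s}_k(t,u)` are block triangular: in block `s` only the
first `k + 1` rows are nonzero, and there they are the rows of `M^s_k(t)`; in a block `i ≠ s` the
remaining rows are the rows of `M^i_{k-1}(t)`, which are among those of `M^i_k(t)`. So a linear
relation among the rows vanishes first on the top `k + 1` rows, then on all the others. Conversely,
for `u = 0` the top `k + 1` rows are `ι_s` of the rows of `M^s_k(t)`. Maximal rank of a matrix is
linear independence of its rows.
-/

open Matrix

theorem Matrix.rank_eq_card_iff_linearIndependent_row {m ι K : Type*} [Fintype m] [Fintype ι]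
    [Field K] (M : Matrix m ι K) : M.rank = Fintype.card m ↔ LinearIndependent K M.row := by
  rw [M.rank_eq_finrank_span_row, linearIndependent_iff_card_eq_finrank_span, Set.finrank, eq_comm]

section Blocks

variable {n : ℕ} (r : Fin n → ℕ)

@[simp]
lemma blockIncl_apply_self (i : Fin n) (v : Fin (r i + 1) → ℂ) (x : Fin (r i + 1)) :
    blockIncl r i v ⟨i, x⟩ = v x := by
  simp [blockIncl]

lemma blockIncl_apply_of_ne {i j : Fin n} (h : j ≠ i) (v : Fin (r i + 1) → ℂ)
    (x : Fin (r j + 1)) : blockIncl r i v ⟨j, x⟩ = 0 := by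
  simp [blockIncl, h]

noncomputable def blockInclₗ (i : Fin n) :
    (Fin (r i + 1) → ℂ) →ₗ[ℂ] (Σ j : Fin n, Fin (r j + 1)) → ℂ where
  toFun := blockIncl r i
  map_add' v w := by funext p; by_cases h : p.1 = i <;> simp [blockIncl, h]
  map_smul' c v := by funext p; by_cases h : p.1 = i <;> simp [blockIncl, h]

end Blocks

section ScrollJet

variable {n : ℕ} (r : Fin n → ℕ) (a : ∀ i : Fin n, ℂ → Fin (r i + 1) → ℂ) (k : ℕ) (s : Fin n)
  (t : ℂ) (u : Fin n → ℂ)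

lemma scrollJet_inl (l : Fin (k + 1)) :
    scrollJet r a k s t u (Sum.inl l) = blockIncl r s (curveJet (r s) (a s) k t l) +
      ∑ i ∈ Finset.univ.filter (· ≠ s), u i • blockIncl r i (curveJet (r i) (a i) k t l) :=
  rfl

lemma scrollJet_inl_of_zero (l : Fin (k + 1)) :
    scrollJet r a k s t 0 (Sum.inl l) = blockInclₗ r s (curveJet (r s) (a s) k t l) := by
  simp [scrollJet_inl, blockInclₗ]

lemma scrollJet_inl_apply_self (l : Fin (k + 1)) (x : Fin (r s + 1)) :
    scrollJet r a k s t u (Sum.inl l) ⟨s, x⟩ = curveJet (r s) (a s) k t l x := by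
  rw [scrollJet_inl, Pi.add_apply, blockIncl_apply_self, Finset.sum_apply,
    Finset.sum_eq_zero fun i hi => ?_, add_zero]
  rw [Pi.smul_apply, blockIncl_apply_of_ne r (Finset.mem_filter.mp hi).2.symm, smul_zero]

lemma scrollJet_inr_apply_self (i : {i : Fin n // i ≠ s}) (m : Fin k) (x : Fin (r i + 1)) :
    scrollJet r a k s t u (Sum.inr (i, m)) ⟨i, x⟩ = curveJet (r i) (a i) k t m.castSucc x :=
  blockIncl_apply_self r _ _ x

lemma scrollJet_inr_apply_of_ne (q : {i : Fin n // i ≠ s} × Fin k) {j : Fin n} (hj : j ≠ q.1)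
    (x : Fin (r j + 1)) : scrollJet r a k s t u (Sum.inr q) ⟨j, x⟩ = 0 :=
  blockIncl_apply_of_ne r hj _ x

lemma scrollJet_inr_apply_base (q : {i : Fin n // i ≠ s} × Fin k) (x : Fin (r s + 1)) :
    scrollJet r a k s t u (Sum.inr q) ⟨s, x⟩ = 0 :=
  scrollJet_inr_apply_of_ne r a k s t u q q.1.2.symm x

lemma card_scrollJet_rows :
    Fintype.card (Fin (k + 1) ⊕ ({i : Fin n // i ≠ s} × Fin k)) = n * k + 1 := by
  obtain ⟨m, rfl⟩ : ∃ m, n = m + 1 := ⟨n - 1, by have := s.pos; omega⟩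
  simp [Fintype.card_subtype_compl]
  ring

theorem linearIndependent_curveJet_of_scrollJet
    (h : LinearIndependent ℂ (scrollJet r a k s t 0).row) :
    LinearIndependent ℂ (curveJet (r s) (a s) k t).row := by
  have hinl := h.comp Sum.inl Sum.inl_injective
  have hrows : (scrollJet r a k s t 0).row ∘ Sum.inl = blockInclₗ r s ∘ (curveJet (r s) (a s) k t).row :=
    funext (scrollJet_inl_of_zero r a k s t)
  rw [hrows] at hinl
  exact hinl.of_comp

theorem linearIndependent_scrollJet
    (h : ∀ i, LinearIndependent ℂ (curveJet (r i) (a i) k t).row) :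
    LinearIndependent ℂ (scrollJet r a k s t u).row := by
  classical
  rw [Fintype.linearIndependent_iff]
  intro g hg
  have hblock (j : Fin n) (x : Fin (r j + 1)) :
      ∑ row, g row * scrollJet r a k s t u row ⟨j, x⟩ = 0 := by
    simpa [Finset.sum_apply] using congrFun hg ⟨j, x⟩
  have hinl (l : Fin (k + 1)) : g (Sum.inl l) = 0 := by
    refine Fintype.linearIndependent_iff.mp (h s) (fun l => g (Sum.inl l)) (funext fun x => ?_) l
    simpa [Fintype.sum_sum_type, scrollJet_inl_apply_self, scrollJet_inr_apply_base]
      using hblock s x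
  have hinr (i : {i : Fin n // i ≠ s}) (m : Fin k) : g (Sum.inr (i, m)) = 0 := by
    refine Fintype.linearIndependent_iff.mp ((h i).comp _ (Fin.castSucc_injective k))
      (fun m => g (Sum.inr (i, m))) (funext fun x => ?_) m
    have hi := hblock i x
    rw [Fintype.sum_sum_type, Fintype.sum_prod_type, Finset.sum_eq_single i] at hi
    · simpa [hinl, scrollJet_inr_apply_self] using hi
    · intro j _ hj
      exact Finset.sum_eq_zero fun m _ => by
        rw [scrollJet_inr_apply_of_ne r a k s t u _ fun h => hj (Subtype.ext h.symm), mul_zero]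
    · simp
  rintro (l | ⟨i, m⟩)
  exacts [hinl l, hinr i m]

end ScrollJet

theorem scrollJet_rank_eq_iff {n : ℕ} (r : Fin n → ℕ) (a : ∀ i : Fin n, ℂ → Fin (r i + 1) → ℂ)
    (k : ℕ) :
    (∀ (t : ℂ) (s : Fin n) (u : Fin n → ℂ), (scrollJet r a k s t u).rank = n * k + 1) ↔
      ∀ (i : Fin n) (t : ℂ), (curveJet (r i) (a i) k t).rank = k + 1 := by
  refine ⟨fun h i t => ?_, fun h t s u => ?_⟩
  · refine ((Matrix.rank_eq_card_iff_linearIndependent_row _).mpr ?_).trans (Fintype.card_fin _)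
    refine linearIndependent_curveJet_of_scrollJet r a k i t ?_
    rw [← Matrix.rank_eq_card_iff_linearIndependent_row, h, card_scrollJet_rows]
  · rw [← card_scrollJet_rows k s, Matrix.rank_eq_card_iff_linearIndependent_row]
    refine linearIndependent_scrollJet r a k s t u fun i => ?_
    rw [← Matrix.rank_eq_card_iff_linearIndependent_row, h, Fintype.card_fin]

theorem statement4_general {n : ℕ} (r : Fin n → ℕ)
    (a : ∀ i : Fin n, ℂ → Fin (r i + 1) → ℂ) :
    (∀ (t : ℂ) (s : Fin n) (u : Fin n → ℂ),
        (scrollJet r a 2 s t u).rank = 2 * n + 1) ↔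
      (∀ (i : Fin n) (t : ℂ), (curveJet (r i) (a i) 2 t).rank = 3) := by
  simpa only [mul_comm n 2] using scrollJet_rank_eq_iff r a 2

/-- Corollary 1.3: assuming moreover `r_i ≥ 2` for all `i`, the
scroll `X` is uninflected iff all the generating curves are uninflected. -/
theorem statement4 {n : ℕ} (hn : 2 ≤ n) (r : Fin n → ℕ) (hr : ∀ i, 2 ≤ r i)
    (a : ∀ i : Fin n, ℂ → Fin (r i + 1) → ℂ)
    (hent : ∀ i j, Differentiable ℂ fun t => a i t j)
    (hnd : ∀ i t, (curveJet (r i) (a i) 1 t).rank = 2) :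
    (∀ (t : ℂ) (s : Fin n) (u : Fin n → ℂ),
        (scrollJet r a 2 s t u).rank = 2 * n + 1) ↔
      (∀ (i : Fin n) (t : ℂ), (curveJet (r i) (a i) 2 t).rank = 3) :=
  statement4_general r a
end
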